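/- Let N > 1 and let χ be a Dirichlet character mod N with conductor N* and induced primitive character χ*. If N1 is the maximal divisor of N having the same prime divisors as N*, and N* ≠ N1/gcd(n, N1), then the Gauss sum G(n, χ) = Σ_{t=0}^{N−1} χ(t) e_N(tn) equals 0. -/

import Mathlib

/-!
Let `d = gcd(n, N1)`, `ψ(t) = e_N(n t)` and `G = ∑ χ(t) ψ(t)`. Choose a prime `p` with
`v_p(N*) ≠ v_p(N1 / d)`. Then `p ∣ N*`, so maximality of `N1` gives `v_p(N1) = v_p(N)`, and
`v_p(N1 / d) = v_p(N) - b` with `b = v_p(d)`. Put `M = N / p^k`.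

If `v_p(N*) > v_p(N1 / d)`, take `k = b`. Then `p^b ∣ n`, so `ψ` is trivial on `M · ℤ/N`,
while `N* ∤ M`. Hence some unit `u ≡ 1 (mod M)` has `χ(u) ≠ 1`, and the substitution `t ↦ u t`
gives `G = χ(u) G`.

If `v_p(N*) < v_p(N1 / d)`, take `k = b + 1`. Then `N* ∣ M` and `M` is nilpotent mod `N`, so `χ`
is trivial on `1 + M · ℤ/N`. But `p^(b+1) ∤ n`, so for every unit `t` the character
`s ↦ ψ(s M t)` is nontrivial. Averaging `G` over the substitutions `t ↦ (1 + s M) t` turns it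
into a multiple of these vanishing character sums.
-/

open Finset

noncomputable def eN (N : ℕ) (x : ℤ) : ℂ :=
  Complex.exp (2 * Real.pi * Complex.I * (x : ℂ) / (N : ℂ))

open AddChar

section Averaging

variable {R R' : Type*} [CommRing R] [Fintype R] [CommRing R'] [IsDomain R'] [CharZero R']

theorem gaussSum_eq_zero_of_forall_one_add_mul {χ : MulChar R R'} {ψ : AddChar R R'} {x : R}
    (hχ : ∀ k, χ (1 + k * x) = 1) (hψ : ∀ t : Rˣ, ψ.mulShift (x * t) ≠ 1) :
    gaussSum χ ψ = 0 := by
  have hshift (k : R) : gaussSum χ ψ = ∑ t, χ t * ψ t * ψ.mulShift (x * t) k := by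
    have hu : IsUnit (1 + k * x) := by
      by_contra h
      simpa [χ.map_nonunit h] using hχ k
    rw [← gaussSum_mulShift χ ψ hu.unit, IsUnit.unit_spec, hχ k, one_mul, gaussSum]
    refine sum_congr rfl fun t _ ↦ ?_
    rw [mulShift_apply, mulShift_apply, mul_assoc, ← map_add_eq_mul]
    ring_nf
  have hsum : (Fintype.card R : R') * gaussSum χ ψ = 0 := calc
    _ = ∑ k : R, gaussSum χ ψ := by rw [sum_const, card_univ, nsmul_eq_mul]
    _ = ∑ t, χ t * ψ t * ∑ k, ψ.mulShift (x * t) k := by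
      simp only [mul_sum]
      exact (sum_congr rfl fun k _ ↦ hshift k).trans sum_comm
    _ = 0 := sum_eq_zero fun t _ ↦ by
      by_cases ht : IsUnit t
      · rw [← ht.unit_spec, sum_eq_zero_of_ne_one (hψ ht.unit), mul_zero]
      · rw [χ.map_nonunit ht, zero_mul, zero_mul]
  simpa [Fintype.card_ne_zero] using hsum

end Averaging

lemma ZMod.isNilpotent_natCast_of_primeFactors_subset {N M : ℕ} [NeZero N] (hM : M ≠ 0)
    (h : N.primeFactors ⊆ M.primeFactors) : IsNilpotent (M : ZMod N) :=
  ⟨N, by rw [← Nat.cast_pow, ZMod.natCast_eq_zero_iff]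
         exact (Nat.dvd_pow_self_iff (NeZero.ne N) hM).mpr h⟩

lemma ZMod.sum_range_natCast {N : ℕ} [NeZero N] {M : Type*} [AddCommMonoid M] (f : ZMod N → M) :
    ∑ t ∈ range N, f t = ∑ a, f a := by
  obtain ⟨m, rfl⟩ := Nat.exists_eq_succ_of_ne_zero (NeZero.ne N)
  rw [← Fin.sum_univ_eq_sum_range]
  exact Fintype.sum_congr _ _ fun i ↦ congrArg f (Fin.cast_val_eq_self i)

lemma ZMod.intCast_mul_natCast_div_eq_zero_iff {N D : ℕ} [NeZero N] (hD : D ∣ N) (n : ℤ) :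
    (n : ZMod N) * ((N / D : ℕ) : ZMod N) = 0 ↔ (D : ℤ) ∣ n := by
  obtain ⟨m, rfl⟩ := hD
  have hD0 : D ≠ 0 := left_ne_zero_of_mul (NeZero.ne (D * m))
  have hm0 : m ≠ 0 := right_ne_zero_of_mul (NeZero.ne (D * m))
  rw [Nat.mul_div_cancel_left m (Nat.pos_of_ne_zero hD0), ← Int.cast_natCast, ← Int.cast_mul,
    ZMod.intCast_zmod_eq_zero_iff_dvd, Nat.cast_mul]
  exact mul_dvd_mul_iff_right (by exact_mod_cast hm0)

lemma Nat.dvd_div_pow_iff_factorization_add_le {Q N p k : ℕ} (hp : p.Prime) (hN : N ≠ 0)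
    (hQ : Q ∣ N) (hk : p ^ k ∣ N) :
    Q ∣ N / p ^ k ↔ Q.factorization p + k ≤ N.factorization p := by
  have hQ0 : Q ≠ 0 := ne_zero_of_dvd_ne_zero hN hQ
  have hpk : p ^ k ≠ 0 := pow_ne_zero k hp.ne_zero
  rw [Nat.dvd_div_iff_mul_dvd hk, ← Nat.factorization_le_iff_dvd (mul_ne_zero hpk hQ0) hN,
    Nat.factorization_mul hpk hQ0, hp.factorization_pow]
  refine ⟨fun h ↦ by simpa [add_comm] using h p, fun h q ↦ ?_⟩
  rcases eq_or_ne q p with rfl | hqp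
  · simpa [add_comm] using h
  · simpa [Finsupp.single_apply, hqp.symm] using
      (Nat.factorization_le_iff_dvd hQ0 hN).mpr hQ q

lemma Nat.primeFactors_subset_primeFactors_div_pow {N p k : ℕ} (hp : p.Prime) (hN : N ≠ 0)
    (hk : p ^ k ∣ N) (hpN : p ∣ N / p ^ k) : N.primeFactors ⊆ (N / p ^ k).primeFactors := by
  intro q hq
  obtain ⟨hq, hqN, -⟩ := Nat.mem_primeFactors.mp hq
  refine Nat.mem_primeFactors.mpr
    ⟨hq, ?_, (Nat.div_ne_zero_iff_of_dvd hk).mpr ⟨hN, pow_ne_zero k hp.ne_zero⟩⟩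
  rcases eq_or_ne q p with rfl | hqp
  · exact hpN
  · have hcop : q.Coprime (p ^ k) := ((Nat.coprime_primes hq hp).mpr hqp).pow_right k
    exact hcop.dvd_of_dvd_mul_left (by rwa [Nat.mul_div_cancel' hk])

lemma Nat.exists_prime_factorization_ne {a b : ℕ} (ha : a ≠ 0) (hb : b ≠ 0) (h : a ≠ b) :
    ∃ p, p.Prime ∧ a.factorization p ≠ b.factorization p := by
  by_contra! H
  refine h (Nat.eq_of_factorization_eq ha hb fun p ↦ ?_)
  by_cases hp : p.Prime
  · exact H p hp
  · simp [Nat.factorization_eq_zero_of_not_prime _ hp]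

lemma Nat.factorization_eq_of_maximal_dvd {N N1 Q p : ℕ} (hN : N ≠ 0) (hN1 : N1 ∣ N)
    (hsame : ∀ q : ℕ, q.Prime → (q ∣ N1 ↔ q ∣ Q))
    (hmax : ∀ d : ℕ, d ∣ N → (∀ q : ℕ, q.Prime → (q ∣ d ↔ q ∣ Q)) → d ∣ N1)
    (hp : p.Prime) (hpQ : p ∣ Q) : N1.factorization p = N.factorization p := by
  have hN10 := ne_zero_of_dvd_ne_zero hN hN1
  refine le_antisymm ((Nat.factorization_le_iff_dvd hN10 hN).mpr hN1 p) ?_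
  rw [← hp.pow_dvd_iff_le_factorization hN10]
  refine (Nat.dvd_lcm_right N1 _).trans
    (hmax _ (Nat.lcm_dvd hN1 (Nat.ordProj_dvd N p)) fun q hq ↦ ?_)
  rw [hq.dvd_lcm, hsame q hq, or_iff_left_iff_imp]
  intro hqp
  rwa [(Nat.prime_dvd_prime_iff_eq hq hp).mp (hq.dvd_of_dvd_pow hqp)]

lemma Int.not_pow_succ_factorization_gcd_dvd {n : ℤ} {m p : ℕ} (hp : p.Prime) (hm : m ≠ 0)
    (h : p ^ ((n.gcd m).factorization p + 1) ∣ m) :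
    ¬ ((p ^ ((n.gcd m).factorization p + 1) : ℕ) : ℤ) ∣ n := by
  intro hn
  refine Nat.pow_succ_factorization_not_dvd
    (Int.gcd_pos_of_ne_zero_right n (Int.natCast_ne_zero.mpr hm)).ne' hp ?_
  exact Int.natCast_dvd_natCast.mp (Int.dvd_coe_gcd hn (Int.natCast_dvd_natCast.mpr h))

namespace DirichletCharacter

variable {R : Type*} [CommRing R] {N : ℕ} [NeZero N]

lemma apply_one_add_mul_eq_one (χ : DirichletCharacter R N) {M : ℕ} (hM : M ∣ N)
    (hQ : χ.conductor ∣ M) (hnil : IsNilpotent (M : ZMod N)) (k : ZMod N) :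
    χ (1 + k * M) = 1 := by
  have hu : IsUnit (1 + k * M) := ((Commute.all k _).isNilpotent_mul_left hnil).isUnit_one_add
  have hker := (factorsThrough_iff_ker_unitsMap hM).mp (χ.factorsThrough_conductor.mono χ hQ hM)
  have hmem : hu.unit ∈ (ZMod.unitsMap hM).ker := by
    rw [MonoidHom.mem_ker, Units.ext_iff, ZMod.unitsMap_def]
    change ZMod.castHom hM (ZMod M) (1 + k * M) = 1
    rw [map_add, map_mul, map_one, map_natCast, ZMod.natCast_self, mul_zero, add_zero]
  simpa [Units.ext_iff] using hker hmem

variable (χ : DirichletCharacter ℂ N) {M p k : ℕ} (n : ℤ)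

lemma gaussSum_mulShift_stdAddChar_eq_zero_of_not_conductor_dvd
    (hM : M ∣ N) (hQ : ¬ χ.conductor ∣ M) {a : ZMod N} (ha : a * M = 0) :
    gaussSum χ (ZMod.stdAddChar.mulShift a) = 0 := by
  by_contra h
  refine hQ (conductor_dvd_of_mem_conductorSet χ ?_)
  exact factorsThrough_of_gaussSum_ne_zero _ hM (by rw [mulShift_mulShift, ha, mulShift_zero]) h

lemma gaussSum_mulShift_stdAddChar_eq_zero_of_conductor_dvd
    (hM : M ∣ N) (hQ : χ.conductor ∣ M) (hnil : IsNilpotent (M : ZMod N)) {a : ZMod N}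
    (ha : a * M ≠ 0) : gaussSum χ (ZMod.stdAddChar.mulShift a) = 0 :=
  gaussSum_eq_zero_of_forall_one_add_mul (χ.apply_one_add_mul_eq_one hM hQ hnil) fun t ↦ by
    rw [mulShift_mulShift, ← mul_assoc]
    exact ZMod.isPrimitive_stdAddChar N (t.isUnit.mul_left_eq_zero.not.mpr ha)

theorem gaussSum_mulShift_stdAddChar_eq_zero_of_pow_dvd (hp : p.Prime) (hk : p ^ k ∣ N)
    (hn : ((p ^ k : ℕ) : ℤ) ∣ n)
    (hlt : N.factorization p < χ.conductor.factorization p + k) :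
    gaussSum χ (ZMod.stdAddChar.mulShift n) = 0 := by
  refine χ.gaussSum_mulShift_stdAddChar_eq_zero_of_not_conductor_dvd (Nat.div_dvd_of_dvd hk) ?_
    ((ZMod.intCast_mul_natCast_div_eq_zero_iff hk n).mpr hn)
  rw [Nat.dvd_div_pow_iff_factorization_add_le hp (NeZero.ne N) χ.conductor_dvd_level hk]
  omega

theorem gaussSum_mulShift_stdAddChar_eq_zero_of_not_pow_dvd (hp : p.Prime) (hk : p ^ k ∣ N)
    (hn : ¬ ((p ^ k : ℕ) : ℤ) ∣ n) (hpQ : p ∣ χ.conductor)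
    (hle : χ.conductor.factorization p + k ≤ N.factorization p) :
    gaussSum χ (ZMod.stdAddChar.mulShift n) = 0 := by
  have hQM : χ.conductor ∣ N / p ^ k :=
    (Nat.dvd_div_pow_iff_factorization_add_le hp (NeZero.ne N) χ.conductor_dvd_level hk).mpr hle
  refine χ.gaussSum_mulShift_stdAddChar_eq_zero_of_conductor_dvd (Nat.div_dvd_of_dvd hk) hQM ?_
    ((ZMod.intCast_mul_natCast_div_eq_zero_iff hk n).not.mpr hn)
  exact ZMod.isNilpotent_natCast_of_primeFactors_subset
    ((Nat.div_ne_zero_iff_of_dvd hk).mpr ⟨NeZero.ne N, pow_ne_zero k hp.ne_zero⟩)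
    (Nat.primeFactors_subset_primeFactors_div_pow hp (NeZero.ne N) hk (hpQ.trans hQM))

end DirichletCharacter

lemma eN_eq_stdAddChar (N : ℕ) [NeZero N] (x : ℤ) : eN N x = ZMod.stdAddChar (x : ZMod N) := by
  rw [ZMod.stdAddChar_coe]; rfl

lemma sum_range_mul_eN_eq_gaussSum {N : ℕ} [NeZero N] (χ : MulChar (ZMod N) ℂ) (n : ℤ) :
    ∑ t ∈ range N, χ t * eN N (t * n) = gaussSum χ (ZMod.stdAddChar.mulShift n) := by
  rw [gaussSum, ← ZMod.sum_range_natCast]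
  refine sum_congr rfl fun t _ ↦ ?_
  rw [eN_eq_stdAddChar, mulShift_apply]
  push_cast
  ring_nf

theorem gauss_sum_vanishes (N : ℕ) (hN : 1 < N) (χ : DirichletCharacter ℂ N)
    (n : ℤ) (N1 : ℕ) (hN1dvd : N1 ∣ N)
    (hsame : ∀ p : ℕ, p.Prime → (p ∣ N1 ↔ p ∣ χ.conductor))
    (hmax : ∀ d : ℕ, d ∣ N → (∀ p : ℕ, p.Prime → (p ∣ d ↔ p ∣ χ.conductor)) → d ∣ N1)
    (hcond : χ.conductor ≠ N1 / Int.gcd n N1) :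
    ∑ t ∈ Finset.range N, χ (t : ZMod N) * eN N (t * n) = 0 := by
  have : NeZero N := ⟨by omega⟩
  rw [sum_range_mul_eN_eq_gaussSum]
  have hN10 : N1 ≠ 0 := ne_zero_of_dvd_ne_zero (NeZero.ne N) hN1dvd
  have hd0 : n.gcd N1 ≠ 0 := (Int.gcd_pos_of_ne_zero_right n (Int.natCast_ne_zero.mpr hN10)).ne'
  have hdN1 : n.gcd N1 ∣ N1 := by simpa using Int.gcd_dvd_natAbs_right n N1
  obtain ⟨p, hp, hne⟩ := Nat.exists_prime_factorization_ne χ.conductor_ne_zero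
    ((Nat.div_ne_zero_iff_of_dvd hdN1).mpr ⟨hN10, hd0⟩) hcond
  have hpQ : p ∣ χ.conductor := by
    by_contra h
    rw [Nat.factorization_eq_zero_of_not_dvd h] at hne
    exact h <| (hsame p hp).mp <|
      (Nat.dvd_of_factorization_pos hne.symm).trans (Nat.div_dvd_of_dvd hdN1)
  have hN1p := Nat.factorization_eq_of_maximal_dvd (NeZero.ne N) hN1dvd hsame hmax hp hpQ
  have hdp : (n.gcd N1).factorization p ≤ N1.factorization p :=
    (Nat.factorization_le_iff_dvd hd0 hN10).mpr hdN1 p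
  rw [Nat.factorization_div hdN1, Finsupp.tsub_apply] at hne
  rcases hne.lt_or_gt with h | h
  · refine χ.gaussSum_mulShift_stdAddChar_eq_zero_of_not_pow_dvd n hp
      ((hp.pow_dvd_iff_le_factorization (NeZero.ne N)).mpr (by omega))
      (Int.not_pow_succ_factorization_gcd_dvd hp hN10
        ((hp.pow_dvd_iff_le_factorization hN10).mpr (by omega))) hpQ (by omega)
  · refine χ.gaussSum_mulShift_stdAddChar_eq_zero_of_pow_dvd n hp
      ((Nat.ordProj_dvd (n.gcd N1) p).trans (hdN1.trans hN1dvd)) ?_ (by omega)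
    exact (Int.natCast_dvd_natCast.mpr (Nat.ordProj_dvd _ p)).trans (Int.gcd_dvd_left n N1)
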